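/- (Injectivity radius / Lemma on κ) Let p > 0 be the residue characteristic, κ := |p|^{1/(p−1)}, and let F(z) = Σ cᵢ(z−a)ⁱ converge on D(a,r). If the derivative F′ has no zeros in D(a,r) (equivalently, F′ has Weierstrass degree 0, i.e., |n cₙ| r^{n−1} ≤ |c₁| for all n ≥ 1), then F − c₀ has Weierstrass degree 1 on the smaller disk D(a, κr); in particular F maps D(a,κr) bijectively onto D(c₀, |c₁|κr). -/

import Mathlib

open Filter Metric

section AuxKappa

variable {K : Type*} [NontriviallyNormedField K]

lemma aux_norm_add_eq_of_lt (hna : IsNonarchimedean (norm : K → ℝ)) {u v : K}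
    (h : ‖v‖ < ‖u‖) : ‖u + v‖ = ‖u‖ := by
  refine le_antisymm ((hna u v).trans (max_le le_rfl h.le)) ?_
  have h2 := hna (u + v) (-v)
  simp only [add_neg_cancel_right, norm_neg] at h2
  rcases max_cases ‖u + v‖ ‖v‖ with ⟨he, _⟩ | ⟨he, _⟩
  · rwa [he] at h2
  · rw [he] at h2; exact absurd (lt_of_le_of_lt h2 h) (lt_irrefl _)

end AuxKappa

/-- Injectivity radius lemma: over a complete algebraically closed field of characteristic
zero with residue characteristic `p > 0`, set `κ := |p|^{1/(p−1)}`.  If a power series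
`F = Σ cₙ (z-a)ⁿ` converging on `D(a,r)` has derivative with no zeros there
(quantitatively: `|n cₙ| r^{n−1} ≤ |c₁|` for all `n ≥ 1`), then `F − c₀` has Weierstrass
degree 1 on `D(a, κr)`, and `F` maps `D(a,κr)` bijectively onto `D(c₀, |c₁| κ r)`. -/
theorem kappa_injectivity {K : Type*} [NontriviallyNormedField K] [CompleteSpace K]
    [IsAlgClosed K] [CharZero K] (hna : IsNonarchimedean (norm : K → ℝ))
    (p : ℕ) (hp : p.Prime) (hp1 : ‖(p : K)‖ < 1) (hp0 : 0 < ‖(p : K)‖)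
    (hres : ∀ n : ℕ, 0 < n → ‖(n : K)‖ = ‖(p : K)‖ ^ (padicValNat p n))
    (a : K) (r : ℝ) (hr : 0 < r) (c : ℕ → K) (hc1 : c 1 ≠ 0)
    (hconv : ∀ s : ℝ, 0 < s → s < r →
      Tendsto (fun n => ‖c n‖ * s ^ n) atTop (nhds 0))
    (hnocrit : ∀ n : ℕ, 1 ≤ n → ‖(n : K)‖ * ‖c n‖ * r ^ (n - 1) ≤ ‖c 1‖) :
    (∀ n : ℕ, 1 ≤ n →
        ‖c n‖ * (‖(p : K)‖ ^ ((1 : ℝ) / ((p : ℝ) - 1)) * r) ^ n ≤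
          ‖c 1‖ * (‖(p : K)‖ ^ ((1 : ℝ) / ((p : ℝ) - 1)) * r)) ∧
    Set.BijOn (fun x => ∑' n, c n * (x - a) ^ n)
      (ball a (‖(p : K)‖ ^ ((1 : ℝ) / ((p : ℝ) - 1)) * r))
      (ball (c 0) (‖c 1‖ * (‖(p : K)‖ ^ ((1 : ℝ) / ((p : ℝ) - 1)) * r))) := by
  haveI : IsUltrametricDist K :=
    IsUltrametricDist.isUltrametricDist_of_isNonarchimedean_norm hna
  set κ : ℝ := ‖(p : K)‖ ^ ((1 : ℝ) / ((p : ℝ) - 1)) with hκdef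
  set F : K → K := fun x => ∑' n, c n * (x - a) ^ n with hFdef
  have hp2 : 2 ≤ p := hp.two_le
  have hpR : (1 : ℝ) ≤ (p : ℝ) - 1 := by
    have : (2 : ℝ) ≤ (p : ℝ) := by exact_mod_cast hp2
    linarith
  have hexp : 0 < (1 : ℝ) / ((p : ℝ) - 1) := by positivity
  have hκ0 : 0 < κ := Real.rpow_pos_of_pos hp0 _
  have hκ1 : κ < 1 := Real.rpow_lt_one hp0.le hp1 hexp
  have hR0 : 0 < κ * r := mul_pos hκ0 hr
  have hRr : κ * r < r := by nlinarith
  have hc1' : 0 < ‖c 1‖ := norm_pos_iff.mpr hc1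
  -- κ ^ (n-1) ≤ ‖n‖
  have hκn : ∀ n : ℕ, 1 ≤ n → κ ^ (n - 1) ≤ ‖(n : K)‖ := by
    intro n hn
    rw [hres n hn]
    set v := padicValNat p n with hv
    have hdvd : p ^ v ∣ n := pow_padicValNat_dvd
    have hlen : (p : ℝ) ^ v ≤ (n : ℝ) := by
      exact_mod_cast Nat.le_of_dvd hn hdvd
    have hber : 1 + (v : ℝ) * ((p : ℝ) - 1) ≤ (p : ℝ) ^ v := by
      have := one_add_mul_le_pow (a := (p : ℝ) - 1) (by linarith) v
      simpa using this
    have hvle : (v : ℝ) ≤ ((n - 1 : ℕ) : ℝ) / ((p : ℝ) - 1) := by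
      rw [le_div_iff₀ (by linarith)]
      have hcast : ((n - 1 : ℕ) : ℝ) = (n : ℝ) - 1 := by
        have : (1 : ℕ) ≤ n := hn
        push_cast [Nat.cast_sub this]
        ring
      rw [hcast]
      linarith
    have h1 : κ ^ (n - 1) = ‖(p : K)‖ ^ (((n - 1 : ℕ) : ℝ) / ((p : ℝ) - 1)) := by
      rw [hκdef, ← Real.rpow_natCast (‖(p : K)‖ ^ ((1 : ℝ) / ((p : ℝ) - 1))) (n - 1),
        ← Real.rpow_mul hp0.le]
      congr 1
      ring
    have h2 : ‖(p : K)‖ ^ v = ‖(p : K)‖ ^ ((v : ℕ) : ℝ) := (Real.rpow_natCast _ v).symm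
    rw [h1, h2]
    exact Real.rpow_le_rpow_of_exponent_ge hp0 hp1.le hvle
  -- Part 1: Weierstrass degree 1 inequality
  have part1 : ∀ n : ℕ, 1 ≤ n → ‖c n‖ * (κ * r) ^ n ≤ ‖c 1‖ * (κ * r) := by
    intro n hn
    obtain ⟨m, rfl⟩ : ∃ m, n = m + 1 := ⟨n - 1, by omega⟩
    have hκm : κ ^ m ≤ ‖((m + 1 : ℕ) : K)‖ := by
      have := hκn (m + 1) (by omega)
      simpa using this
    have hkey : ‖c (m + 1)‖ * (κ ^ m * r ^ m) ≤ ‖c 1‖ := by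
      have h1 : ‖c (m + 1)‖ * (κ ^ m * r ^ m) ≤
          ‖c (m + 1)‖ * (‖((m + 1 : ℕ) : K)‖ * r ^ m) := by
        have hrm : (0 : ℝ) ≤ r ^ m := by positivity
        have := mul_le_mul_of_nonneg_right hκm hrm
        exact mul_le_mul_of_nonneg_left this (norm_nonneg _)
      have h2 := hnocrit (m + 1) (by omega)
      simp only [Nat.add_sub_cancel] at h2
      calc ‖c (m + 1)‖ * (κ ^ m * r ^ m)
          ≤ ‖c (m + 1)‖ * (‖((m + 1 : ℕ) : K)‖ * r ^ m) := h1
        _ = ‖((m + 1 : ℕ) : K)‖ * ‖c (m + 1)‖ * r ^ m := by ring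
        _ ≤ ‖c 1‖ := h2
    calc ‖c (m + 1)‖ * (κ * r) ^ (m + 1)
        = (‖c (m + 1)‖ * (κ ^ m * r ^ m)) * (κ * r) := by ring
      _ ≤ ‖c 1‖ * (κ * r) := mul_le_mul_of_nonneg_right hkey hR0.le
  -- Summability
  have hsum : ∀ x : K, ‖x - a‖ < r → Summable (fun n => c n * (x - a) ^ n) := by
    intro x hx
    apply NonarchimedeanAddGroup.summable_of_tendsto_cofinite_zero
    rw [Nat.cofinite_eq_atTop]
    set s : ℝ := max ‖x - a‖ (r / 2) with hs
    have hs0 : 0 < s := lt_of_lt_of_le (by linarith) (le_max_right _ _)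
    have hsr : s < r := max_lt hx (by linarith)
    rw [tendsto_zero_iff_norm_tendsto_zero]
    refine squeeze_zero (fun n => norm_nonneg _) (fun n => ?_) (hconv s hs0 hsr)
    rw [norm_mul, norm_pow]
    have : ‖x - a‖ ^ n ≤ s ^ n :=
      pow_le_pow_left₀ (norm_nonneg _) (le_max_left _ _) n
    exact mul_le_mul_of_nonneg_left this (norm_nonneg _)
  -- Error estimate
  have herr : ∀ s : ℝ, 0 ≤ s → s < κ * r → ∀ x y : K, ‖x - a‖ ≤ s → ‖y - a‖ ≤ s →
      ‖F x - F y - c 1 * (x - y)‖ ≤ s / (κ * r) * (‖c 1‖ * ‖x - y‖) := by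
    intro s hs0 hsR x y hx hy
    have hxr : ‖x - a‖ < r := lt_of_le_of_lt hx (hsR.trans hRr)
    have hyr : ‖y - a‖ < r := lt_of_le_of_lt hy (hsR.trans hRr)
    have Sx := hsum x hxr
    have Sy := hsum y hyr
    set g : ℕ → K := fun n => c n * ((x - a) ^ n - (y - a) ^ n) with hgdef
    have hg : Summable g := by
      simpa only [hgdef, mul_sub] using Sx.sub Sy
    have hFg : F x - F y = ∑' n, g n := by
      rw [hFdef]
      simp only
      rw [← Summable.tsum_sub Sx Sy]
      exact tsum_congr fun n => (mul_sub _ _ _).symm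
    have hg1 : Summable fun n => g (n + 1) := (summable_nat_add_iff 1).mpr hg
    have e1 : ∑' n, g n = g 0 + (g 1 + ∑' n, g (n + 2)) := by
      rw [Summable.tsum_eq_zero_add hg, Summable.tsum_eq_zero_add hg1]
    have h0 : g 0 = 0 := by simp [hgdef]
    have h1 : g 1 = c 1 * (x - y) := by
      simp only [hgdef, pow_one]
      ring
    have hsplit : F x - F y - c 1 * (x - y) = ∑' n, g (n + 2) := by
      rw [hFg, e1, h0, h1]
      ring
    rw [hsplit]
    have hC : (0 : ℝ) ≤ s / (κ * r) * (‖c 1‖ * ‖x - y‖) := by positivity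
    refine IsUltrametricDist.norm_tsum_le_of_forall_le_of_nonneg hC (fun n => ?_)
    -- bound each term
    have hfac : (x - a) ^ (n + 2) - (y - a) ^ (n + 2) =
        (∑ i ∈ Finset.range (n + 2), (x - a) ^ i * (y - a) ^ (n + 1 - i)) * (x - y) := by
      have := geom_sum₂_mul (x - a) (y - a) (n + 2)
      rw [show n + 2 - 1 = n + 1 by omega] at this
      rw [← this]
      congr 1
      ring
    have hsumb : ‖∑ i ∈ Finset.range (n + 2), (x - a) ^ i * (y - a) ^ (n + 1 - i)‖
        ≤ s ^ (n + 1) := by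
      refine IsUltrametricDist.norm_sum_le_of_forall_le_of_nonneg (by positivity)
        (fun i hi => ?_)
      rw [Finset.mem_range] at hi
      rw [norm_mul, norm_pow, norm_pow]
      calc ‖x - a‖ ^ i * ‖y - a‖ ^ (n + 1 - i)
          ≤ s ^ i * s ^ (n + 1 - i) := by
            exact mul_le_mul (pow_le_pow_left₀ (norm_nonneg _) hx i)
              (pow_le_pow_left₀ (norm_nonneg _) hy _) (by positivity) (by positivity)
        _ = s ^ (n + 1) := by
            rw [← pow_add]
            congr 1
            omega
    have hcoef : ‖c (n + 2)‖ * s ^ (n + 1) ≤ ‖c 1‖ * (s / (κ * r)) := by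
      have hp1' : ‖c (n + 2)‖ * (κ * r) ^ (n + 1) ≤ ‖c 1‖ := by
        have h := part1 (n + 2) (by omega)
        have h' : (‖c (n + 2)‖ * (κ * r) ^ (n + 1)) * (κ * r) ≤ ‖c 1‖ * (κ * r) := by
          calc (‖c (n + 2)‖ * (κ * r) ^ (n + 1)) * (κ * r)
              = ‖c (n + 2)‖ * (κ * r) ^ (n + 2) := by ring
            _ ≤ ‖c 1‖ * (κ * r) := h
        exact le_of_mul_le_mul_right h' hR0
      have hq1 : s / (κ * r) ≤ 1 := by
        rw [div_le_one hR0]; exact hsR.le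
      have hqpow : (s / (κ * r)) ^ (n + 1) ≤ s / (κ * r) :=
        pow_le_of_le_one (by positivity) hq1 (by omega)
      have hss : s ^ (n + 1) = (κ * r) ^ (n + 1) * (s / (κ * r)) ^ (n + 1) := by
        rw [← mul_pow, mul_div_cancel₀ _ hR0.ne']
      calc ‖c (n + 2)‖ * s ^ (n + 1)
          = (‖c (n + 2)‖ * (κ * r) ^ (n + 1)) * (s / (κ * r)) ^ (n + 1) := by
            rw [hss]; ring
        _ ≤ ‖c 1‖ * (s / (κ * r)) := by
            exact mul_le_mul hp1' hqpow (by positivity) hc1'.le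
    calc ‖g (n + 2)‖ = ‖c (n + 2)‖ *
          (‖∑ i ∈ Finset.range (n + 2), (x - a) ^ i * (y - a) ^ (n + 1 - i)‖ * ‖x - y‖) := by
          rw [hgdef]
          simp only
          rw [norm_mul, hfac, norm_mul]
      _ ≤ ‖c (n + 2)‖ * (s ^ (n + 1) * ‖x - y‖) := by
          refine mul_le_mul_of_nonneg_left ?_ (norm_nonneg _)
          exact mul_le_mul_of_nonneg_right hsumb (norm_nonneg _)
      _ = (‖c (n + 2)‖ * s ^ (n + 1)) * ‖x - y‖ := by ring
      _ ≤ (‖c 1‖ * (s / (κ * r))) * ‖x - y‖ :=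
          mul_le_mul_of_nonneg_right hcoef (norm_nonneg _)
      _ = s / (κ * r) * (‖c 1‖ * ‖x - y‖) := by ring
  -- Isometry
  have hiso : ∀ x y : K, ‖x - a‖ < κ * r → ‖y - a‖ < κ * r →
      ‖F x - F y‖ = ‖c 1‖ * ‖x - y‖ := by
    intro x y hx hy
    rcases eq_or_ne x y with rfl | hxy
    · simp
    set s : ℝ := max ‖x - a‖ ‖y - a‖ with hs
    have hsR : s < κ * r := max_lt hx hy
    have hs0 : 0 ≤ s := le_trans (norm_nonneg _) (le_max_left _ _)
    have hE := herr s hs0 hsR x y (le_max_left _ _) (le_max_right _ _)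
    have hxy0 : 0 < ‖x - y‖ := norm_pos_iff.mpr (sub_ne_zero.mpr hxy)
    have hlt : ‖F x - F y - c 1 * (x - y)‖ < ‖c 1 * (x - y)‖ := by
      rw [norm_mul]
      refine lt_of_le_of_lt hE ?_
      have hq : s / (κ * r) < 1 := (div_lt_one hR0).mpr hsR
      have hpos : 0 < ‖c 1‖ * ‖x - y‖ := mul_pos hc1' hxy0
      calc s / (κ * r) * (‖c 1‖ * ‖x - y‖) < 1 * (‖c 1‖ * ‖x - y‖) :=
            mul_lt_mul_of_pos_right hq hpos
        _ = ‖c 1‖ * ‖x - y‖ := one_mul _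
    have hdecomp : F x - F y = c 1 * (x - y) + (F x - F y - c 1 * (x - y)) := by ring
    rw [hdecomp, aux_norm_add_eq_of_lt hna hlt, norm_mul]
  -- F a = c 0
  have hFa : F a = c 0 := by
    rw [hFdef]
    simp only [sub_self]
    rw [tsum_eq_single 0 (fun n hn => by simp [zero_pow hn])]
    simp
  -- MapsTo
  have hmaps : Set.MapsTo F (ball a (κ * r)) (ball (c 0) (‖c 1‖ * (κ * r))) := by
    intro x hx
    rw [mem_ball, dist_eq_norm] at hx ⊢
    have ha0 : ‖a - a‖ < κ * r := by simpa using hR0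
    have := hiso x a hx ha0
    rw [← hFa, this]
    exact mul_lt_mul_of_pos_left hx hc1'
  -- InjOn
  have hinj : Set.InjOn F (ball a (κ * r)) := by
    intro x hx y hy hxy
    rw [mem_ball, dist_eq_norm] at hx hy
    have := hiso x y hx hy
    rw [hxy, sub_self, norm_zero] at this
    have : ‖x - y‖ = 0 := by
      rcases mul_eq_zero.mp this.symm with h | h
      · exact absurd h hc1'.ne'
      · exact h
    rw [norm_eq_zero, sub_eq_zero] at this
    exact this
  -- SurjOn
  have hsurj : Set.SurjOn F (ball a (κ * r)) (ball (c 0) (‖c 1‖ * (κ * r))) := by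
    intro w hw
    rw [mem_ball, dist_eq_norm] at hw
    set ρ : ℝ := ‖w - c 0‖ / ‖c 1‖ with hρdef
    have hρ0 : 0 ≤ ρ := by positivity
    have hρR : ρ < κ * r := by
      rw [hρdef, div_lt_iff₀ hc1']
      calc ‖w - c 0‖ < ‖c 1‖ * (κ * r) := hw
        _ = κ * r * ‖c 1‖ := by ring
    set q : ℝ := ρ / (κ * r) with hqdef
    have hq0 : 0 ≤ q := by positivity
    have hq1 : q < 1 := (div_lt_one hR0).mpr hρR
    -- Newton iteration
    set x : ℕ → K := fun k => Nat.rec a (fun _ xk => xk + (w - F xk) / c 1) k with hxdef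
    have hstep : ∀ k, x (k + 1) = x k + (w - F (x k)) / c 1 := fun k => rfl
    have hx0 : x 0 = a := rfl
    have hbound : ∀ k, ‖x k - a‖ ≤ ρ ∧ ‖w - F (x k)‖ ≤ ‖c 1‖ * ρ * q ^ k := by
      intro k
      induction k with
      | zero =>
        constructor
        · rw [hx0]; simpa using hρ0
        · rw [hx0, hFa, pow_zero, mul_one, hρdef, mul_div_cancel₀ _ hc1'.ne']
      | succ k ih =>
        obtain ⟨ih1, ih2⟩ := ih
        have hqk1 : q ^ k ≤ 1 := pow_le_one₀ hq0 hq1.le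
        have hh : ‖(w - F (x k)) / c 1‖ ≤ ρ * q ^ k := by
          rw [norm_div, div_le_iff₀ hc1']
          calc ‖w - F (x k)‖ ≤ ‖c 1‖ * ρ * q ^ k := ih2
            _ = ρ * q ^ k * ‖c 1‖ := by ring
        have hhρ : ‖(w - F (x k)) / c 1‖ ≤ ρ :=
          hh.trans (mul_le_of_le_one_right hρ0 hqk1)
        have hx1 : ‖x (k + 1) - a‖ ≤ ρ := by
          rw [hstep]
          have : x k + (w - F (x k)) / c 1 - a = (x k - a) + (w - F (x k)) / c 1 := by ring
          rw [this]
          exact le_trans (hna _ _) (max_le ih1 hhρ)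
        refine ⟨hx1, ?_⟩
        have hc1h : c 1 * ((w - F (x k)) / c 1) = w - F (x k) :=
          mul_div_cancel₀ _ hc1
        have hdiff : x (k + 1) - x k = (w - F (x k)) / c 1 := by
          rw [hstep]; ring
        have hE := herr ρ hρ0 hρR (x (k + 1)) (x k) hx1 ih1
        have hrw : F (x (k + 1)) - F (x k) - c 1 * (x (k + 1) - x k)
            = F (x (k + 1)) - w := by
          rw [hdiff, hc1h]; ring
        rw [hrw, hdiff] at hE
        calc ‖w - F (x (k + 1))‖ = ‖F (x (k + 1)) - w‖ := norm_sub_rev _ _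
          _ ≤ ρ / (κ * r) * (‖c 1‖ * ‖(w - F (x k)) / c 1‖) := hE
          _ ≤ ρ / (κ * r) * (‖c 1‖ * (ρ * q ^ k)) := by
              refine mul_le_mul_of_nonneg_left ?_ (by positivity)
              exact mul_le_mul_of_nonneg_left hh hc1'.le
          _ = ‖c 1‖ * ρ * q ^ (k + 1) := by rw [hqdef]; ring
    have hdist : ∀ k, dist (x k) (x (k + 1)) ≤ ρ * q ^ k := by
      intro k
      rw [dist_eq_norm, hstep]
      have : x k - (x k + (w - F (x k)) / c 1) = -((w - F (x k)) / c 1) := by ring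
      rw [this, norm_neg, norm_div, div_le_iff₀ hc1']
      calc ‖w - F (x k)‖ ≤ ‖c 1‖ * ρ * q ^ k := (hbound k).2
        _ = ρ * q ^ k * ‖c 1‖ := by ring
    have hcauchy : CauchySeq x := cauchySeq_of_le_geometric q ρ hq1 hdist
    obtain ⟨z, hz⟩ := cauchySeq_tendsto_of_complete hcauchy
    have hzρ : ‖z - a‖ ≤ ρ := by
      have hmem : z ∈ closedBall a ρ := by
        refine Metric.isClosed_closedBall.mem_of_tendsto hz (Eventually.of_forall fun k => ?_)
        rw [mem_closedBall, dist_eq_norm]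
        exact (hbound k).1
      rwa [mem_closedBall, dist_eq_norm] at hmem
    have hzR : ‖z - a‖ < κ * r := lt_of_le_of_lt hzρ hρR
    have hxkR : ∀ k, ‖x k - a‖ < κ * r := fun k => lt_of_le_of_lt (hbound k).1 hρR
    -- F (x k) → F z
    have h1 : Tendsto (fun k => F (x k)) atTop (nhds (F z)) := by
      rw [tendsto_iff_norm_sub_tendsto_zero]
      have hz' := tendsto_iff_norm_sub_tendsto_zero.mp hz
      have h0 : Tendsto (fun k => ‖c 1‖ * ‖x k - z‖) atTop (nhds 0) := by
        have := hz'.const_mul ‖c 1‖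
        simpa using this
      refine squeeze_zero (fun k => norm_nonneg _) (fun k => ?_) h0
      rw [hiso (x k) z (hxkR k) hzR]
    -- F (x k) → w
    have h2 : Tendsto (fun k => F (x k)) atTop (nhds w) := by
      rw [tendsto_iff_norm_sub_tendsto_zero]
      have hgeo : Tendsto (fun k : ℕ => ‖c 1‖ * ρ * q ^ k) atTop (nhds 0) := by
        have := (tendsto_pow_atTop_nhds_zero_of_lt_one hq0 hq1).const_mul (‖c 1‖ * ρ)
        simpa using this
      refine squeeze_zero (fun k => norm_nonneg _) (fun k => ?_) hgeo
      rw [norm_sub_rev]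
      exact (hbound k).2
    have hFz : F z = w := tendsto_nhds_unique h1 h2
    exact ⟨z, by rw [mem_ball, dist_eq_norm]; exact hzR, hFz⟩
  exact ⟨part1, hmaps, hinj, hsurj⟩
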